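/- arXiv:1305.1659 — 2 statements merged into one kernel-verified Lean document; each statement's English description precedes it below -/
import Mathlib

section
/- Assume N − r is even. Then every Q×Q complex matrix X satisfying h·X·hᵀ = X for all h in the hypergeometric group H_{q,d} satisfies X_{i,1} = −(1/2)·(h₁)_{i,1}·X_{1,1} for all 2 ≤ i ≤ Q, where h₁ = h₀⁻¹·h∞⁻¹. -/
/-!
Write `h₁ = h₀⁻¹ h∞⁻¹`. Since `h₀⁻¹` and `h∞` differ only in their last column and the first row
of `h∞` is `-A_Q e_Qᵀ`, `h₁ = 1 + u e₁ᵀ` with `u_i = A_Q (B_{Q-i+1} - A_{Q-i+1})`. The constant terms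
are `A_Q = (-1)^r` and `B_Q = (-1)^(N+1)`, so when `N - r` is even `u₁ = A_Q B_Q - A_Q² = -2` and
`h₁` is a reflection. The `(i, 1)` entry of `h₁ X h₁ᵀ = X` then reads `X_{i1} = -X_{i1} - u_i X_{11}`.
-/

open Polynomial Matrix

/-- The `Q × Q` integer companion-type matrix with ones on the subdiagonal,
last column `(-A Q, -A (Q-1), …, -A 1)ᵀ` from top to bottom, and zeros elsewhere. -/
def compMat (Q : ℕ) (A : ℕ → ℤ) : Matrix (Fin Q) (Fin Q) ℤ :=
  Matrix.of fun i j =>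
    if (j : ℕ) + 1 = Q then -A (Q - (i : ℕ))
    else if (i : ℕ) = (j : ℕ) + 1 then 1 else 0

lemma eval_zero_prod_X_pow_sub_one {R ι : Type*} [CommRing R] [Fintype ι] (d : ι → ℕ)
    (hd : ∀ k, 0 < d k) : eval 0 (∏ k, ((X : R[X]) ^ d k - 1)) = (-1) ^ Fintype.card ι := by
  simp [eval_prod, zero_pow (hd _).ne']

lemma eval_zero_X_pow_add_sum {R : Type*} [CommRing R] {Q : ℕ} (hQ : 0 < Q) (a : ℕ → R) :
    eval 0 ((X : R[X]) ^ Q + ∑ i ∈ Finset.Icc 1 Q, C (a i) * X ^ (Q - i)) = a Q := by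
  rw [eval_add, eval_pow, eval_X, zero_pow hQ.ne', zero_add, eval_finsetSum,
    Finset.sum_eq_single_of_mem Q (Finset.right_mem_Icc.mpr hQ)]
  · simp
  · intro i hi hiQ
    have : Q - i ≠ 0 := by rw [Finset.mem_Icc] at hi; omega
    simp [zero_pow this]

lemma last_coeff_eq_neg_one_pow {ι : Type*} [Fintype ι] {Q : ℕ} (hQ : 0 < Q) {d : ι → ℕ}
    (hd : ∀ k, 0 < d k) {A : ℕ → ℤ}
    (hA : ∏ k, ((X : ℤ[X]) ^ d k - 1) = X ^ Q + ∑ i ∈ Finset.Icc 1 Q, C (A i) * X ^ (Q - i)) :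
    A Q = (-1) ^ Fintype.card ι := by
  have h := congrArg (eval 0) hA
  rwa [eval_zero_prod_X_pow_sub_one d hd, eval_zero_X_pow_add_sum hQ, eq_comm] at h

lemma neg_one_pow_mul_neg_one_pow_succ_of_even_sub {N r : ℕ} (h : Even ((N : ℤ) - r)) :
    (-1 : ℤ) ^ r * (-1) ^ (N + 1) = -1 := by
  have hNr : Even (N + r) := by exact_mod_cast Int.even_add.mpr (Int.even_sub.mp h)
  rw [← pow_add, show r + (N + 1) = N + r + 1 by ring, pow_succ, hNr.neg_one_pow]
  norm_num

section PseudoRefl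

variable {R n : Type*} [CommRing R] [DecidableEq n]

def pseudoRefl (u : n → R) (j : n) : Matrix n n R :=
  1 + vecMulVec u (Pi.single j 1)

lemma pseudoRefl_apply (u : n → R) (j i k : n) :
    pseudoRefl u j i k = (if i = k then 1 else 0) + if k = j then u i else 0 := by
  simp [pseudoRefl, one_apply, vecMulVec_apply, Pi.single_apply]

lemma pseudoRefl_apply_of_ne (u : n → R) {i j : n} (h : i ≠ j) : pseudoRefl u j i j = u i := by
  simp [pseudoRefl_apply, h]

lemma pseudoRefl_map {S : Type*} [CommRing S] (f : R →+* S) (u : n → R) (j : n) :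
    (pseudoRefl u j).map f = pseudoRefl (f ∘ u) j := by
  ext i k
  simp only [map_apply, pseudoRefl_apply]
  split_ifs <;> simp

lemma pseudoRefl_mul_mul_transpose_apply [Fintype n] (u : n → R) (j i : n) (M : Matrix n n R) :
    (pseudoRefl u j * M * (pseudoRefl u j)ᵀ) i j = (1 + u j) * (M i j + u i * M j j) := by
  simp only [pseudoRefl, add_mul, mul_add, one_mul, mul_one, transpose_add, transpose_one,
    transpose_vecMulVec, vecMulVec_mul, mul_vecMulVec, Matrix.add_apply, vecMulVec_apply,
    single_vecMul, mulVec_single, row_apply, col_apply, MulOpposite.op_one, one_smul]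
  ring

lemma two_mul_apply_of_pseudoRefl_invariant [Fintype n] {u : n → R} {j : n} (hu : u j = -2)
    {M : Matrix n n R} (hM : pseudoRefl u j * M * (pseudoRefl u j)ᵀ = M) (i : n) :
    2 * M i j = -(u i * M j j) := by
  have h := pseudoRefl_mul_mul_transpose_apply u j i M
  rw [hM, hu] at h
  linear_combination h

end PseudoRefl

lemma compMat_eq_pseudoRefl_mul {Q : ℕ} (hQ : 0 < Q) {A : ℕ → ℤ} (B : ℕ → ℤ)
    (hA : A Q * A Q = 1) :
    compMat Q B =
      pseudoRefl (fun i : Fin Q => A Q * (B (Q - i) - A (Q - i))) ⟨0, hQ⟩ * compMat Q A := by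
  ext i j
  rw [pseudoRefl, add_mul, one_mul, vecMulVec_mul, Matrix.add_apply, vecMulVec_apply,
    single_vecMul, one_smul, row_apply]
  by_cases hj : (j : ℕ) + 1 = Q
  · simp only [compMat, of_apply, hj, if_true, Nat.sub_zero]
    linear_combination (B (Q - i) - A (Q - i)) * hA
  · simp [compMat, hj]

theorem invariant_first_column_even_case_general
    (N r Q : ℕ) (hQ : 0 < Q) (q : Fin (N + 1) → ℕ) (d : Fin r → ℕ)
    (hq : ∀ ν, 0 < q ν) (hd : ∀ k, 0 < d k)
    (A B : ℕ → ℤ)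
    (hA : ∏ k, ((X : ℤ[X]) ^ d k - 1)
      = X ^ Q + ∑ i ∈ Finset.Icc 1 Q, C (A i) * X ^ (Q - i))
    (hB : ∏ ν, ((X : ℤ[X]) ^ q ν - 1)
      = X ^ Q + ∑ i ∈ Finset.Icc 1 Q, C (B i) * X ^ (Q - i))
    (ginf g0inv : GL (Fin Q) ℤ)
    (hginf : (ginf : Matrix (Fin Q) (Fin Q) ℤ) = compMat Q A)
    (hg0inv : (g0inv : Matrix (Fin Q) (Fin Q) ℤ) = compMat Q B)
    (hparity : Even ((N : ℤ) - (r : ℤ)))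
    (Xm : Matrix (Fin Q) (Fin Q) ℂ)
    (hXm : ∀ h ∈ Subgroup.closure ({ginf, g0inv} : Set (GL (Fin Q) ℤ)),
      ((h : Matrix (Fin Q) (Fin Q) ℤ).map (Int.cast : ℤ → ℂ)) * Xm
        * ((h : Matrix (Fin Q) (Fin Q) ℤ).map (Int.cast : ℤ → ℂ))ᵀ = Xm) :
    ∀ i : Fin Q, 1 ≤ (i : ℕ) →
      Xm i ⟨0, hQ⟩ =
        -(1/2) * (((compMat Q B * (compMat Q A)⁻¹) i ⟨0, hQ⟩ : ℤ) : ℂ)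
          * Xm ⟨0, hQ⟩ ⟨0, hQ⟩ := by
  intro i hi
  have hAQ : A Q = (-1) ^ r := by simpa using last_coeff_eq_neg_one_pow hQ hd hA
  have hBQ : B Q = (-1) ^ (N + 1) := by simpa using last_coeff_eq_neg_one_pow hQ hq hB
  have hAA : A Q * A Q = 1 := by rw [hAQ, ← pow_add, Even.neg_one_pow ⟨r, rfl⟩]
  have hAB : A Q * B Q = -1 := by
    rw [hAQ, hBQ, neg_one_pow_mul_neg_one_pow_succ_of_even_sub hparity]
  set u : Fin Q → ℤ := fun i => A Q * (B (Q - i) - A (Q - i))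
  have hu : u ⟨0, hQ⟩ = -2 := by simp only [u, Nat.sub_zero]; linear_combination hAB - hAA
  have hH : compMat Q B * (compMat Q A)⁻¹ = pseudoRefl u ⟨0, hQ⟩ := by
    rw [compMat_eq_pseudoRefl_mul hQ B hAA, Matrix.mul_assoc,
      mul_nonsing_inv _ ((isUnit_iff_isUnit_det _).mp (hginf ▸ ginf.isUnit)), Matrix.mul_one]
  have hmem : g0inv * ginf⁻¹ ∈ Subgroup.closure ({ginf, g0inv} : Set (GL (Fin Q) ℤ)) :=
    mul_mem (Subgroup.subset_closure (by simp)) (inv_mem (Subgroup.subset_closure (by simp)))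
  have hinv := hXm _ hmem
  have hmap := pseudoRefl_map (Int.castRingHom ℂ) u ⟨0, hQ⟩
  rw [Int.coe_castRingHom] at hmap
  rw [Units.val_mul, coe_units_inv, hginf, hg0inv, hH, hmap] at hinv
  have h2 := two_mul_apply_of_pseudoRefl_invariant (by simp [hu]) hinv i
  rw [Function.comp_apply] at h2
  rw [hH, pseudoRefl_apply_of_ne _ (Fin.ne_of_val_ne (Nat.one_le_iff_ne_zero.mp hi))]
  linear_combination h2 / 2

/-- If `N - r` is even, any matrix invariant under the hypergeometric group `H_{q,d}`
satisfies `X_{i,1} = -(1/2)·(h₁)_{i,1}·X_{1,1}` for `2 ≤ i ≤ Q`, where `h₁ = h₀⁻¹·h∞⁻¹`. -/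
theorem invariant_first_column_even_case
    (N r Q : ℕ) (hQ : 0 < Q) (q : Fin (N + 1) → ℕ) (d : Fin r → ℕ)
    (hq : ∀ ν, 0 < q ν) (hd : ∀ k, 0 < d k)
    (hQq : Q = ∑ ν, q ν) (hQd : Q = ∑ k, d k)
    (A B : ℕ → ℤ)
    (hA : ∏ k, ((X : ℤ[X]) ^ d k - 1)
      = X ^ Q + ∑ i ∈ Finset.Icc 1 Q, C (A i) * X ^ (Q - i))
    (hB : ∏ ν, ((X : ℤ[X]) ^ q ν - 1)
      = X ^ Q + ∑ i ∈ Finset.Icc 1 Q, C (B i) * X ^ (Q - i))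
    (ginf g0inv : GL (Fin Q) ℤ)
    (hginf : (ginf : Matrix (Fin Q) (Fin Q) ℤ) = compMat Q A)
    (hg0inv : (g0inv : Matrix (Fin Q) (Fin Q) ℤ) = compMat Q B)
    (hparity : Even ((N : ℤ) - (r : ℤ)))
    (Xm : Matrix (Fin Q) (Fin Q) ℂ)
    (hXm : ∀ h ∈ Subgroup.closure ({ginf, g0inv} : Set (GL (Fin Q) ℤ)),
      ((h : Matrix (Fin Q) (Fin Q) ℤ).map (Int.cast : ℤ → ℂ)) * Xm
        * ((h : Matrix (Fin Q) (Fin Q) ℤ).map (Int.cast : ℤ → ℂ))ᵀ = Xm) :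
    ∀ i : Fin Q, 1 ≤ (i : ℕ) →
      Xm i ⟨0, hQ⟩ =
        -(1/2) * (((compMat Q B * (compMat Q A)⁻¹) i ⟨0, hQ⟩ : ℤ) : ℂ)
          * Xm ⟨0, hQ⟩ ⟨0, hQ⟩ :=
  invariant_first_column_even_case_general N r Q hQ q d hq hd A B hA hB ginf g0inv hginf hg0inv
    hparity Xm hXm
end

section
/- Assume e₁,…,e_p are pairwise distinct and μ_p ≥ 2, and let h₀ = L₁·E₀·L₁⁻¹, where L₁ is any Q×Q lower-triangular matrix equal to the identity except in its last row, which is (c₁, c₂, …, c_{Q−1}, 1) for arbitrary complex numbers c₁,…,c_{Q−1}. Then a vector v = (v₁,…,v_Q)ᵀ ∈ ℂ^Q is cyclic with respect to h₀ (i.e. v, h₀v, …, h₀^{Q−1}v span ℂ^Q) if and only if ∏_{α=1}^p v_{σ_{α−1}+1} ≠ 0. -/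
open Matrix

/-- Partial sums `σ_a = μ_0 + ⋯ + μ_{a-1}` of the block sizes. -/
def sigmaSum (μ : ℕ → ℕ) (a : ℕ) : ℕ := ∑ b ∈ Finset.range a, μ b

/-- The index of the block containing position `i`: the largest `a ≤ p` with `σ_a ≤ i`. -/
def blkOf (p : ℕ) (μ : ℕ → ℕ) (i : ℕ) : ℕ :=
  Nat.findGreatest (fun a => sigmaSum μ a ≤ i) p

/-- The block-diagonal matrix `E₀` whose `α`-th diagonal block is the
`μ_α × μ_α` Jordan-type block `e_α·id + J_{μ_α,-}` (ones on the subdiagonal). -/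
def E0mat (Q p : ℕ) (μ : ℕ → ℕ) (e : ℕ → ℂ) : Matrix (Fin Q) (Fin Q) ℂ :=
  Matrix.of fun i j =>
    if i = j then e (blkOf p μ (i : ℕ))
    else if (i : ℕ) = (j : ℕ) + 1 ∧ blkOf p μ (i : ℕ) = blkOf p μ (j : ℕ) then 1
    else 0

/-- The lower-triangular matrix equal to the identity except in its last row,
which is `(c_1, c_2, …, c_{Q-1}, 1)`. -/
def L1mat (Q : ℕ) (c : ℕ → ℂ) : Matrix (Fin Q) (Fin Q) ℂ :=
  Matrix.of fun i j =>
    if i = j then 1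
    else if (i : ℕ) = Q - 1 then c ((j : ℕ) + 1)
    else 0

/-!
Conjugating by `L₁` turns the question into cyclicity of `w = L₁⁻¹ v` for `E₀`, and `w` agrees
with `v` except in the last coordinate, which is not the first coordinate of a block since
`μ_p ≥ 2`. If the first coordinate of some block of `w` vanishes, it vanishes for every `E₀ᵏ w`,
because no subdiagonal entry of `E₀` leads into a block start. Conversely, a linear relation
`∑ gₖ E₀ᵏ w = 0` gives a polynomial `f` of degree `< Q` with `f(E₀) w = 0`. On block `α` the
coordinates of `f(E₀) w` are the convolution of the Hasse derivatives `(hasseDeriv j f)(e_α)`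
with the entries of `w` in that block, so a nonzero first entry forces them to vanish for
`j < μ_α`. Hence `∏ (X - e_α)^μ_α`, of degree `Q`, divides `f`, and `f = 0`.
-/

open Finset Polynomial

theorem Matrix.span_range_conj_pow_mulVec_eq_top_iff {K n : Type*} [Field K] [Fintype n]
    [DecidableEq n] {L : Matrix n n K} (hL : IsUnit L) (A : Matrix n n K) (m : ℕ) (v : n → K) :
    Submodule.span K (Set.range fun k : Fin m => (L * A * L⁻¹) ^ (k : ℕ) *ᵥ v) = ⊤ ↔
      Submodule.span K (Set.range fun k : Fin m => A ^ (k : ℕ) *ᵥ (L⁻¹ *ᵥ v)) = ⊤ := by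
  obtain ⟨u, rfl⟩ := hL
  have hconj : ∀ k : ℕ, ((u : Matrix n n K) * A * (u : Matrix n n K)⁻¹) ^ k *ᵥ v =
      toLin' u (A ^ k *ᵥ ((u : Matrix n n K)⁻¹ *ᵥ v)) := fun k => by
    rw [← coe_units_inv, Units.conj_pow, toLin'_apply, mulVec_mulVec, mulVec_mulVec]
  simp_rw [hconj]
  rw [Set.range_comp' (toLin' (u : Matrix n n K)), Submodule.span_image]
  exact Submodule.map_eq_top_iff (e := toLinearEquiv' _ u.invertible)

namespace Polynomial

theorem X_sub_C_pow_dvd_of_hasseDeriv_eval_eq_zero {R : Type*} [CommRing R] {f : R[X]} {r : R}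
    {n : ℕ}
    (h : ∀ d < n, (hasseDeriv d f).eval r = 0) : (X - C r) ^ n ∣ f := by
  rw [X_sub_C_pow_dvd_iff, ← taylor_apply, X_pow_dvd_iff]
  intro d hd
  rw [taylor_coeff]
  exact h d hd

theorem eq_zero_of_hasseDeriv_eval_eq_zero {K ι : Type*} [Field K] {s : Finset ι} {e : ι → K}
    (he : Set.InjOn e s) (μ : ι → ℕ) {f : K[X]} (hf : f.degree < ↑(∑ i ∈ s, μ i))
    (h : ∀ i ∈ s, ∀ d < μ i, (hasseDeriv d f).eval (e i) = 0) : f = 0 := by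
  have hdvd : (∏ i ∈ s, (X - C (e i)) ^ μ i) ∣ f := by
    refine Finset.prod_dvd_of_coprime (fun i hi j hj hij => ?_) fun i hi =>
      X_sub_C_pow_dvd_of_hasseDeriv_eval_eq_zero (h i hi)
    exact (isCoprime_X_sub_C_of_isUnit_sub (sub_ne_zero.2 fun h => hij (he hi hj h)).isUnit).pow
  refine eq_zero_of_dvd_of_degree_lt hdvd (hf.trans_eq ?_)
  rw [degree_prod, Nat.cast_sum]
  simp

end Polynomial

theorem eq_zero_of_sum_range_mul_eq_zero {R : Type*} [Semiring R] [NoZeroDivisors R]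
    {h w : ℕ → R} (hw : w 0 ≠ 0) {N : ℕ}
    (hhw : ∀ n < N, ∑ j ∈ range (n + 1), h j * w (n - j) = 0) : ∀ n < N, h n = 0 := by
  intro n
  induction n using Nat.strong_induction_on with
  | _ n ih =>
    intro hn
    have hsum := hhw n hn
    rw [sum_range_succ, sum_eq_zero fun j hj => by
      rw [ih j (mem_range.1 hj) ((mem_range.1 hj).trans hn), zero_mul], zero_add,
      Nat.sub_self] at hsum
    exact (mul_eq_zero.1 hsum).resolve_right hw

theorem choose_mul_pow_succ_succ {R : Type*} [CommSemiring R] (a : R) (k j : ℕ) :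
    ((k + 1).choose (j + 1) : R) * a ^ (k + 1 - (j + 1)) =
      a * ((k.choose (j + 1) : R) * a ^ (k - (j + 1))) + (k.choose j : R) * a ^ (k - j) := by
  rw [Nat.choose_succ_succ', Nat.cast_add, Nat.add_sub_add_right]
  rcases lt_or_ge j k with hjk | hjk
  · rw [show k - j = k - (j + 1) + 1 by omega, pow_succ]
    ring
  · rw [Nat.choose_eq_zero_of_lt (by omega : k < j + 1)]
    simp

def IsBlockStart (p : ℕ) (μ : ℕ → ℕ) (i : ℕ) : Prop := sigmaSum μ (blkOf p μ i) = i

section Blocks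
variable {p : ℕ} {μ : ℕ → ℕ}

theorem sigmaSum_mono (μ : ℕ → ℕ) : Monotone (sigmaSum μ) := fun _ _ h =>
  sum_le_sum_of_subset (range_subset_range.2 h)

theorem blkOf_le (i : ℕ) : blkOf p μ i ≤ p := Nat.findGreatest_le p

theorem sigmaSum_blkOf_le (i : ℕ) : sigmaSum μ (blkOf p μ i) ≤ i :=
  Nat.findGreatest_spec (P := fun a => sigmaSum μ a ≤ i) (Nat.zero_le p) (by simp [sigmaSum])

theorem le_blkOf {a i : ℕ} (ha : a ≤ p) (hai : sigmaSum μ a ≤ i) : a ≤ blkOf p μ i :=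
  Nat.le_findGreatest ha hai

theorem blkOf_lt {i : ℕ} (hi : i < sigmaSum μ p) : blkOf p μ i < p :=
  (blkOf_le i).lt_of_ne fun h => by
    have := sigmaSum_blkOf_le (p := p) (μ := μ) i
    rw [h] at this
    omega

theorem lt_sigmaSum_blkOf_succ {i : ℕ} (hi : i < sigmaSum μ p) :
    i < sigmaSum μ (blkOf p μ i + 1) :=
  not_le.1 <| Nat.findGreatest_is_greatest (P := fun a => sigmaSum μ a ≤ i) (Nat.lt_succ_self _)
    (blkOf_lt hi)

theorem blkOf_eq {a i : ℕ} (ha : a ≤ p) (h₁ : sigmaSum μ a ≤ i) (h₂ : i < sigmaSum μ (a + 1)) :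
    blkOf p μ i = a := by
  refine le_antisymm (not_lt.1 fun h => ?_) (le_blkOf ha h₁)
  have := (sigmaSum_mono μ (show a + 1 ≤ _ from h)).trans (sigmaSum_blkOf_le (p := p) i)
  omega

theorem sigmaSum_blkOf_sigmaSum {a : ℕ} (ha : a ≤ p) :
    sigmaSum μ (blkOf p μ (sigmaSum μ a)) = sigmaSum μ a :=
  le_antisymm (sigmaSum_blkOf_le _) (sigmaSum_mono μ (le_blkOf ha le_rfl))

theorem blkOf_eq_blkOf_iff {i m : ℕ} (hi : i < sigmaSum μ p) (hmi : m ≤ i) :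
    blkOf p μ m = blkOf p μ i ↔ sigmaSum μ (blkOf p μ i) ≤ m := by
  refine ⟨fun h => h ▸ sigmaSum_blkOf_le m, fun h => blkOf_eq (blkOf_le i) h ?_⟩
  exact hmi.trans_lt (lt_sigmaSum_blkOf_succ hi)

theorem sigmaSum_add_le_of_lt {α : ℕ} (hα : α < p) :
    sigmaSum μ α + μ (p - 1) ≤ sigmaSum μ p := by
  obtain ⟨q, rfl⟩ : ∃ q, p = q + 1 := ⟨p - 1, by omega⟩
  have hq : sigmaSum μ (q + 1) = sigmaSum μ q + μ q := sum_range_succ μ q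
  have := sigmaSum_mono μ (show α ≤ q by omega)
  simp only [Nat.add_sub_cancel]
  omega

end Blocks

section E0
variable {p Q : ℕ} {μ : ℕ → ℕ}

theorem E0mat_mulVec_apply (hQ : Q ≤ sigmaSum μ p) (e y : ℕ → ℂ) (i : Fin Q) :
    (E0mat Q p μ e *ᵥ fun m : Fin Q => y m) i =
      e (blkOf p μ i) * y i + if sigmaSum μ (blkOf p μ i) < i then y (i - 1) else 0 := by
  have hi : (i : ℕ) < sigmaSum μ p := i.isLt.trans_le hQ
  have hentry : ∀ m : Fin Q, E0mat Q p μ e i m * y m =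
      (if i = m then e (blkOf p μ i) * y m else 0) +
        if (m : ℕ) = i - 1 ∧ sigmaSum μ (blkOf p μ i) < i then y m else 0 := by
    intro m
    by_cases him : i = m
    · subst him
      simp only [E0mat, of_apply, if_true]
      rw [if_neg (by omega)]
      ring
    · have : ((i : ℕ) = m + 1 ∧ blkOf p μ i = blkOf p μ m) ↔
          ((m : ℕ) = i - 1 ∧ sigmaSum μ (blkOf p μ i) < i) := by
        constructor
        · rintro ⟨h₁, h₂⟩
          have := (blkOf_eq_blkOf_iff hi (m := m) (by omega)).1 h₂.symm
          omega
        · rintro ⟨h₁, h₂⟩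
          exact ⟨by omega, ((blkOf_eq_blkOf_iff hi (by omega)).2 (by omega)).symm⟩
      simp only [E0mat, of_apply, him, if_false, zero_add, this]
      split_ifs <;> simp
  simp only [mulVec, dotProduct, hentry, sum_add_distrib, sum_ite_eq, mem_univ, if_true]
  congr 1
  split_ifs with h
  · rw [sum_eq_single ⟨i - 1, by omega⟩ (fun m _ hm => if_neg fun h' => hm (Fin.ext h'.1))
      (by simp)]
    simp [h]
  · simp [h]

theorem E0mat_pow_mulVec_apply (hQ : Q ≤ sigmaSum μ p) (e w : ℕ → ℂ) (k : ℕ) (i : Fin Q) :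
    (E0mat Q p μ e ^ k *ᵥ fun m : Fin Q => w m) i =
      ∑ j ∈ range (i - sigmaSum μ (blkOf p μ i) + 1),
        (k.choose j : ℂ) * e (blkOf p μ i) ^ (k - j) * w (i - j) := by
  induction k generalizing i with
  | zero =>
    rw [sum_range_succ', sum_eq_zero fun j _ => by simp]
    simp
  | succ k ih =>
    set G : ℕ → ℂ := fun n => ∑ j ∈ range (n - sigmaSum μ (blkOf p μ n) + 1),
      (k.choose j : ℂ) * e (blkOf p μ n) ^ (k - j) * w (n - j)
    have hi : (i : ℕ) < sigmaSum μ p := i.isLt.trans_le hQ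
    have hprev : (if sigmaSum μ (blkOf p μ i) < i then G (i - 1) else 0) =
        ∑ j ∈ range (i - sigmaSum μ (blkOf p μ i)),
          (k.choose j : ℂ) * e (blkOf p μ i) ^ (k - j) * w (i - (j + 1)) := by
      split_ifs with h
      · have hblk : blkOf p μ (i - 1) = blkOf p μ i :=
          (blkOf_eq_blkOf_iff hi (by omega)).2 (by omega)
        simp only [G, hblk]
        rw [show (i : ℕ) - 1 - sigmaSum μ (blkOf p μ i) + 1 = i - sigmaSum μ (blkOf p μ i) by
          omega]
        exact sum_congr rfl fun j _ => by rw [Nat.sub_sub, add_comm 1 j]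
      · rw [show (i : ℕ) - sigmaSum μ (blkOf p μ i) = 0 by omega, sum_range_zero]
    rw [pow_succ', ← mulVec_mulVec, show (E0mat Q p μ e ^ k *ᵥ fun m : Fin Q => w m) =
      fun m : Fin Q => G m from funext ih, E0mat_mulVec_apply hQ, hprev]
    simp only [G]
    rw [sum_range_succ', sum_range_succ', mul_add, mul_sum, add_comm, ← add_assoc,
      ← sum_add_distrib]
    congr 1
    · refine sum_congr rfl fun j _ => ?_
      rw [choose_mul_pow_succ_succ]
      ring
    · simp [pow_succ]
      ring

theorem aeval_E0mat_mulVec_apply (hQ : Q ≤ sigmaSum μ p) (e w : ℕ → ℂ) (f : ℂ[X]) (i : Fin Q) :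
    (aeval (E0mat Q p μ e) f *ᵥ fun m : Fin Q => w m) i =
      ∑ j ∈ range (i - sigmaSum μ (blkOf p μ i) + 1),
        (hasseDeriv j f).eval (e (blkOf p μ i)) * w (i - j) := by
  induction f using Polynomial.induction_on' with
  | add f g hf hg => simp only [map_add, add_mulVec, Pi.add_apply, hf, hg, eval_add, add_mul,
      sum_add_distrib]
  | monomial n a =>
    rw [aeval_monomial, ← Algebra.smul_def, smul_mulVec, Pi.smul_apply,
      E0mat_pow_mulVec_apply hQ, smul_eq_mul, mul_sum]
    refine sum_congr rfl fun j _ => ?_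
    rw [hasseDeriv_monomial, eval_monomial]
    ring

theorem E0mat_pow_mulVec_apply_of_isBlockStart (hQ : Q ≤ sigmaSum μ p) (e w : ℕ → ℂ) (k : ℕ)
    {j : Fin Q} (hj : IsBlockStart p μ j) :
    (E0mat Q p μ e ^ k *ᵥ fun m : Fin Q => w m) j = e (blkOf p μ j) ^ k * w j := by
  rw [E0mat_pow_mulVec_apply hQ, hj, Nat.sub_self, sum_range_one]
  simp

theorem hasseDeriv_eval_eq_zero_of_aeval_E0mat_mulVec_eq_zero (hQ : Q = sigmaSum μ p)
    {e w : ℕ → ℂ} (hw : ∀ j : Fin Q, IsBlockStart p μ j → w j ≠ 0) {f : ℂ[X]}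
    (hf : aeval (E0mat Q p μ e) f *ᵥ (fun m : Fin Q => w m) = 0) {α : ℕ} (hα : α < p) :
    ∀ d < μ α, (hasseDeriv d f).eval (e α) = 0 := by
  have hσ : sigmaSum μ (α + 1) = sigmaSum μ α + μ α := sum_range_succ μ α
  have hσQ : sigmaSum μ (α + 1) ≤ Q := hQ ▸ sigmaSum_mono μ hα
  intro d hd
  refine eq_zero_of_sum_range_mul_eq_zero (h := fun j => (hasseDeriv j f).eval (e α))
    (w := fun n => w (sigmaSum μ α + n)) ?_ (fun n hn => ?_) d hd
  · exact hw ⟨sigmaSum μ α, by omega⟩ (sigmaSum_blkOf_sigmaSum hα.le)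
  · have hblk : blkOf p μ (sigmaSum μ α + n) = α :=
      blkOf_eq hα.le (Nat.le_add_right _ _) (by omega)
    have hn := congr_fun hf ⟨sigmaSum μ α + n, by omega⟩
    rw [Pi.zero_apply, aeval_E0mat_mulVec_apply hQ.le] at hn
    simp only [hblk, Nat.add_sub_cancel_left] at hn
    rw [← hn]
    refine sum_congr rfl fun j hj => ?_
    rw [Nat.add_sub_assoc (Nat.lt_succ_iff.1 (mem_range.1 hj))]

theorem span_E0mat_pow_mulVec_eq_top_iff (hQ : Q = sigmaSum μ p) {e : ℕ → ℂ}
    (he : Set.InjOn e (Set.Iio p)) (x : Fin Q → ℂ) :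
    Submodule.span ℂ (Set.range fun k : Fin Q => E0mat Q p μ e ^ (k : ℕ) *ᵥ x) = ⊤ ↔
      ∀ j : Fin Q, IsBlockStart p μ j → x j ≠ 0 := by
  obtain ⟨w, rfl⟩ : ∃ w : ℕ → ℂ, x = fun m : Fin Q => w m :=
    ⟨Function.extend Fin.val x 0, funext fun m => (Fin.val_injective.extend_apply x 0 m).symm⟩
  constructor
  · intro hspan j hj hwj
    have hle : Submodule.span ℂ (Set.range fun k : Fin Q => E0mat Q p μ e ^ (k : ℕ) *ᵥ
        fun m : Fin Q => w m) ≤ LinearMap.ker (LinearMap.proj j) := by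
      rw [Submodule.span_le]
      rintro _ ⟨k, rfl⟩
      simp [E0mat_pow_mulVec_apply_of_isBlockStart hQ.le e w k hj, hwj]
    rw [hspan, top_le_iff, LinearMap.ker_eq_top] at hle
    simpa using LinearMap.congr_fun hle (Pi.single j 1)
  · intro hw
    refine LinearIndependent.span_eq_top_of_card_eq_finrank' ?_ (by simp)
    rw [Fintype.linearIndependent_iff]
    intro g hg
    set f : ℂ[X] := ∑ k : Fin Q, C (g k) * X ^ (k : ℕ)
    have hf : aeval (E0mat Q p μ e) f *ᵥ (fun m : Fin Q => w m) = 0 := by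
      simpa only [f, map_sum, map_mul, aeval_C, aeval_X_pow, ← Algebra.smul_def, sum_mulVec,
        smul_mulVec] using hg
    have hf0 : f = 0 :=
      eq_zero_of_hasseDeriv_eval_eq_zero (s := range p) (by simpa using he) μ
        ((degree_sum_fin_lt g).trans_eq (by rw [hQ]; rfl)) fun α hα =>
        hasseDeriv_eval_eq_zero_of_aeval_E0mat_mulVec_eq_zero hQ hw hf (mem_range.1 hα)
    intro k
    simpa [f, finsetSum_coeff, coeff_C_mul_X_pow, Fin.val_inj] using congr_arg (coeff · k) hf0

end E0

section L1
variable {Q : ℕ} (c : ℕ → ℂ)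

theorem det_L1mat : (L1mat Q c).det = 1 := by
  rw [det_of_isLowerTriangular]
  · exact prod_eq_one fun i _ => by simp [L1mat]
  · intro i j hij
    have : (i : ℕ) < j := hij
    simp only [L1mat, of_apply]
    rw [if_neg (by rintro rfl; omega), if_neg (by omega)]

theorem L1mat_mulVec_apply_of_ne {j : Fin Q} (hj : (j : ℕ) ≠ Q - 1) (x : Fin Q → ℂ) :
    (L1mat Q c *ᵥ x) j = x j := by
  simp [mulVec, dotProduct, L1mat, hj]

end L1

theorem cyclic_iff_prod_ne_zero_general
    (p Q : ℕ) (μ : ℕ → ℕ)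
    (hQ : Q = ∑ α ∈ Finset.range p, μ α)
    (e : ℕ → ℂ) (he : ∀ α < p, ∀ β < p, α ≠ β → e α ≠ e β)
    (hμp : 2 ≤ μ (p - 1))
    (c : ℕ → ℂ) (v : ℕ → ℂ) :
    Submodule.span ℂ (Set.range fun i : Fin Q =>
        ((L1mat Q c * E0mat Q p μ e * (L1mat Q c)⁻¹) ^ (i : ℕ)) *ᵥ fun k : Fin Q => v (k : ℕ))
      = ⊤
    ↔ (∏ α ∈ Finset.range p, v (sigmaSum μ α)) ≠ 0 := by
  have hdet : IsUnit (L1mat Q c).det := by simp [det_L1mat]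
  have hinv : ∀ j : Fin Q, (j : ℕ) ≠ Q - 1 →
      ((L1mat Q c)⁻¹ *ᵥ fun k : Fin Q => v k) j = v j := fun j hj => by
    rw [← L1mat_mulVec_apply_of_ne c hj ((L1mat Q c)⁻¹ *ᵥ _), mulVec_mulVec,
      mul_nonsing_inv _ hdet, one_mulVec]
  have hstart : ∀ α < p, sigmaSum μ α + 2 ≤ Q := fun α hα =>
    (Nat.add_le_add_left hμp _).trans ((sigmaSum_add_le_of_lt hα).trans_eq hQ.symm)
  rw [span_range_conj_pow_mulVec_eq_top_iff ((isUnit_iff_isUnit_det _).2 hdet),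
    span_E0mat_pow_mulVec_eq_top_iff hQ fun α hα β hβ h => by_contra fun hne => he α hα β hβ hne h,
    prod_ne_zero_iff]
  constructor
  · intro h α hα
    have hσ := hstart α (mem_range.1 hα)
    have := h ⟨sigmaSum μ α, by omega⟩ (sigmaSum_blkOf_sigmaSum (mem_range.1 hα).le)
    rwa [hinv _ (by dsimp only; omega)] at this
  · intro h j hj
    have hb : blkOf p μ j < p := blkOf_lt (j.isLt.trans_eq hQ)
    have hσ := hstart _ hb
    rw [hinv j (by unfold IsBlockStart at hj; omega), ← hj]
    exact h _ (mem_range.2 hb)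

/-- A vector `v` is cyclic for `h₀ = L₁·E₀·L₁⁻¹` if and only if
`∏_{α=1}^p v_{σ_{α-1}+1} ≠ 0`, provided the `e_α` are pairwise distinct and `μ_p ≥ 2`. -/
theorem cyclic_iff_prod_ne_zero
    (p Q : ℕ) (hp : 1 ≤ p) (μ : ℕ → ℕ) (hμ : ∀ α < p, 0 < μ α)
    (hQ : Q = ∑ α ∈ Finset.range p, μ α)
    (e : ℕ → ℂ) (he : ∀ α < p, ∀ β < p, α ≠ β → e α ≠ e β)
    (hμp : 2 ≤ μ (p - 1))
    (c : ℕ → ℂ) (v : ℕ → ℂ) :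
    Submodule.span ℂ (Set.range fun i : Fin Q =>
        ((L1mat Q c * E0mat Q p μ e * (L1mat Q c)⁻¹) ^ (i : ℕ)) *ᵥ fun k : Fin Q => v (k : ℕ))
      = ⊤
    ↔ (∏ α ∈ Finset.range p, v (sigmaSum μ α)) ≠ 0 :=
  cyclic_iff_prod_ne_zero_general p Q μ hQ e he hμp c v
end
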